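/- Let p > 0 be a real number and let G be a connected simple graph with n vertices and m edges, with Laplacian eigenvalues 0 = λ_1 < λ_2 ≤ ... ≤ λ_n. Then BH(G) ≥ n·((2m)^{p+1} / Σ_{i=2}^{n} λ_i^{3p+1})^{1/p}, with equality if and only if G is the complete graph K_n. -/

import Mathlib

open Finset Polynomial

/-- The eigenvalues of the Laplacian matrix of `G` over `ℝ`, as produced (in no
particular order) by the spectral theorem for symmetric matrices. -/
noncomputable def lapEigsUnordered {V : Type*} [Fintype V] [DecidableEq V]
    (G : SimpleGraph V) [DecidableRel G.Adj] : V → ℝ :=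
  (SimpleGraph.posSemidef_lapMatrix (R := ℝ) (G := G)).1.eigenvalues

/-- `μ : Fin n → ℝ` lists the eigenvalues of the Laplacian matrix of `G`
in nondecreasing order (so, `0`-based, `μ ⟨0,_⟩ = λ₁ ≤ μ ⟨1,_⟩ = λ₂ ≤ ⋯`). -/
def IsLapEigSeq {V : Type*} [Fintype V] [DecidableEq V] (G : SimpleGraph V)
    [DecidableRel G.Adj] {n : ℕ} (μ : Fin n → ℝ) : Prop :=
  Monotone μ ∧ ∃ e : V ≃ Fin n, ∀ v, lapEigsUnordered G v = μ (e v)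

/-! The nonzero Laplacian eigenvalues `λᵢ` sum to the trace `2m` of `L`. Jensen's inequality for
the strictly convex `t ↦ t ^ (p + 1)`, at the points `λᵢ ^ 3` with weights proportional to
`λᵢ ^ (-2)`, gives `(Σ λᵢ) ^ (p + 1) ≤ (Σ λᵢ ^ (-2)) ^ p * Σ λᵢ ^ (3p + 1)`, which is the bound
after taking `p`-th roots; equality holds iff all nonzero eigenvalues coincide, i.e. iff
`L ^ 2 = c • L` for some `c`. For non-adjacent `u ≠ v` every term of
`(L ^ 2) u v = Σ k, L u k * L k v` is nonnegative and a common neighbour contributes `1`, so then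
non-adjacent vertices have no common neighbour, which in a connected graph forces `G = ⊤`;
conversely `L(Kₙ) ^ 2 = n • L(Kₙ)`. -/

lemma div_rpow_add_one_le_div_iff {p T W : ℝ} (hT : 0 ≤ T) (hW : 0 < W) (B : ℝ) :
    (T / W) ^ (p + 1) ≤ B / W ↔ T ^ (p + 1) ≤ W ^ p * B := by
  have hWp : 0 < W ^ p := Real.rpow_pos_of_pos hW p
  rw [Real.div_rpow hT hW.le, Real.rpow_add_one hW.ne', ← mul_div_mul_left B W hWp.ne',
    div_le_div_iff_of_pos_right (by positivity)]

lemma div_rpow_add_one_eq_div_iff {p T W : ℝ} (hT : 0 ≤ T) (hW : 0 < W) (B : ℝ) :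
    (T / W) ^ (p + 1) = B / W ↔ T ^ (p + 1) = W ^ p * B := by
  have hWp : 0 < W ^ p := Real.rpow_pos_of_pos hW p
  rw [Real.div_rpow hT hW.le, Real.rpow_add_one hW.ne', ← mul_div_mul_left B W hWp.ne',
    div_left_inj' (by positivity)]

lemma div_rpow_one_div_le_iff {p y A B : ℝ} (hy : 0 ≤ y) (hA : 0 ≤ A) (hB : 0 < B) (hp : 0 < p) :
    (y / B) ^ (1 / p) ≤ A ↔ y ≤ A ^ p * B := by
  rw [one_div, Real.rpow_inv_le_iff_of_pos (by positivity) hA hp, div_le_iff₀ hB]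

lemma div_rpow_one_div_eq_iff {p y A B : ℝ} (hy : 0 ≤ y) (hA : 0 ≤ A) (hB : 0 < B) (hp : 0 < p) :
    (y / B) ^ (1 / p) = A ↔ y = A ^ p * B := by
  rw [one_div, Real.rpow_inv_eq (by positivity) hA hp.ne', div_eq_iff hB.ne']

section WeightedPowerMean
variable {ι : Type*} {s : Finset ι} {w z : ι → ℝ} {p : ℝ}

lemma sum_div_sum_smul (f : ι → ℝ) :
    ∑ i ∈ s, (w i / ∑ j ∈ s, w j) • f i = (∑ i ∈ s, w i * f i) / ∑ i ∈ s, w i := by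
  rw [sum_div]
  exact sum_congr rfl fun i _ => by rw [smul_eq_mul, div_mul_eq_mul_div]

lemma sum_div_sum_eq_one (hW : ∑ i ∈ s, w i ≠ 0) : ∑ i ∈ s, w i / ∑ j ∈ s, w j = 1 := by
  rw [← sum_div, div_self hW]

theorem rpow_sum_mul_le (hs : s.Nonempty) (hw : ∀ i ∈ s, 0 < w i) (hz : ∀ i ∈ s, 0 ≤ z i)
    (hp : 0 ≤ p) :
    (∑ i ∈ s, w i * z i) ^ (p + 1) ≤ (∑ i ∈ s, w i) ^ p * ∑ i ∈ s, w i * z i ^ (p + 1) := by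
  have hW : 0 < ∑ i ∈ s, w i := sum_pos hw hs
  have hT : 0 ≤ ∑ i ∈ s, w i * z i := sum_nonneg fun i hi => mul_nonneg (hw i hi).le (hz i hi)
  rw [← div_rpow_add_one_le_div_iff hT hW, ← sum_div_sum_smul, ← sum_div_sum_smul]
  exact (convexOn_rpow (by linarith)).map_sum_le (fun i hi => (div_pos (hw i hi) hW).le)
    (sum_div_sum_eq_one hW.ne') hz

theorem rpow_sum_mul_eq_iff (hs : s.Nonempty) (hw : ∀ i ∈ s, 0 < w i) (hz : ∀ i ∈ s, 0 ≤ z i)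
    (hp : 0 < p) :
    (∑ i ∈ s, w i * z i) ^ (p + 1) = (∑ i ∈ s, w i) ^ p * ∑ i ∈ s, w i * z i ^ (p + 1) ↔
      ∀ i ∈ s, ∀ j ∈ s, z i = z j := by
  have hW : 0 < ∑ i ∈ s, w i := sum_pos hw hs
  have hT : 0 ≤ ∑ i ∈ s, w i * z i := sum_nonneg fun i hi => mul_nonneg (hw i hi).le (hz i hi)
  rw [← div_rpow_add_one_eq_div_iff hT hW, ← sum_div_sum_smul, ← sum_div_sum_smul]
  exact (strictConvexOn_rpow (by linarith)).map_sum_eq_iff_of_pos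
    (fun i hi => div_pos (hw i hi) hW) (sum_div_sum_eq_one hW.ne') hz

end WeightedPowerMean

lemma one_div_sq_mul_pow_three {x : ℝ} (hx : 0 < x) : 1 / x ^ 2 * x ^ 3 = x := by
  field_simp

lemma one_div_sq_mul_pow_three_rpow {x : ℝ} (hx : 0 < x) (p : ℝ) :
    1 / x ^ 2 * (x ^ 3) ^ (p + 1) = x ^ (3 * p + 1) := by
  rw [← Real.rpow_natCast x 3, ← Real.rpow_mul hx.le, one_div, ← Real.rpow_natCast x 2,
    ← Real.rpow_neg hx.le, ← Real.rpow_add hx]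
  congr 1
  push_cast
  ring

section InverseSquares
variable {ι : Type*} {s : Finset ι} {x : ι → ℝ} {p : ℝ}

theorem rpow_sum_le_sum_one_div_sq_rpow_mul (hs : s.Nonempty) (hx : ∀ i ∈ s, 0 < x i)
    (hp : 0 ≤ p) :
    (∑ i ∈ s, x i) ^ (p + 1) ≤ (∑ i ∈ s, 1 / x i ^ 2) ^ p * ∑ i ∈ s, x i ^ (3 * p + 1) := by
  have h := rpow_sum_mul_le (w := fun i => 1 / x i ^ 2) (z := fun i => x i ^ 3) hs
    (fun i hi => by have := hx i hi; positivity) (fun i hi => by have := hx i hi; positivity) hp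
  rwa [sum_congr rfl fun i hi => one_div_sq_mul_pow_three (hx i hi),
    sum_congr rfl fun i hi => one_div_sq_mul_pow_three_rpow (hx i hi) p] at h

theorem rpow_sum_eq_sum_one_div_sq_rpow_mul_iff (hs : s.Nonempty) (hx : ∀ i ∈ s, 0 < x i)
    (hp : 0 < p) :
    (∑ i ∈ s, x i) ^ (p + 1) = (∑ i ∈ s, 1 / x i ^ 2) ^ p * ∑ i ∈ s, x i ^ (3 * p + 1) ↔
      ∀ i ∈ s, ∀ j ∈ s, x i = x j := by
  have h := rpow_sum_mul_eq_iff (w := fun i => 1 / x i ^ 2) (z := fun i => x i ^ 3) hs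
    (fun i hi => by have := hx i hi; positivity) (fun i hi => by have := hx i hi; positivity) hp
  rw [sum_congr rfl fun i hi => one_div_sq_mul_pow_three (hx i hi),
    sum_congr rfl fun i hi => one_div_sq_mul_pow_three_rpow (hx i hi) p] at h
  rw [h]
  exact forall₂_congr fun i hi => forall₂_congr fun j hj =>
    pow_left_inj₀ (hx i hi).le (hx j hj).le three_ne_zero

end InverseSquares

theorem forall_mem_eq_iff_exists_mul_self_eq {ι : Type*} {t : Finset ι} {f : ι → ℝ}
    (ht : t.Nonempty) (hne : ∀ i ∈ t, f i ≠ 0) (hzero : ∀ i ∉ t, f i = 0) :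
    (∀ i ∈ t, ∀ j ∈ t, f i = f j) ↔ ∃ c, ∀ i, f i * f i = c * f i := by
  constructor
  · intro h
    obtain ⟨j, hj⟩ := ht
    refine ⟨f j, fun i => ?_⟩
    by_cases hi : i ∈ t
    · rw [h i hi j hj]
    · rw [hzero i hi, mul_zero, mul_zero]
  · rintro ⟨c, hc⟩ i hi j hj
    have hconst : ∀ k ∈ t, f k = c := fun k hk => mul_right_cancel₀ (hne k hk) (hc k)
    rw [hconst i hi, hconst j hj]

theorem Matrix.IsHermitian.mul_self_eq_smul_iff {𝕜 n : Type*} [RCLike 𝕜] [Fintype n]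
    [DecidableEq n] {A : Matrix n n 𝕜} (hA : A.IsHermitian) (c : ℝ) :
    A * A = c • A ↔ ∀ i, hA.eigenvalues i * hA.eigenvalues i = c * hA.eigenvalues i := by
  have hsa : IsSelfAdjoint A := hA
  have hcfc : A * A = c • A ↔ cfc (fun x : ℝ => x * x) A = cfc (fun x : ℝ => c * x) A := by
    rw [cfc_mul .., cfc_const_mul .., cfc_id' ℝ A]
  rw [hcfc, cfc_eq_cfc_iff_eqOn, hA.spectrum_real_eq_range_eigenvalues]
  exact Set.forall_mem_range

namespace SimpleGraph

theorem Connected.eq_top_of_adj_of_adj {V : Type*} {G : SimpleGraph V} (hG : G.Connected)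
    (h : ∀ u v w, G.Adj u w → G.Adj w v → u ≠ v → G.Adj u v) : G = ⊤ := by
  ext u v
  refine ⟨Adj.ne, fun huv => ?_⟩
  have hclosed : ∀ b, Relation.ReflTransGen G.Adj u b → b = u ∨ G.Adj u b := by
    intro b hb
    induction hb with
    | refl => exact .inl rfl
    | @tail a b _ hab ih =>
      rcases ih with rfl | hua
      · exact .inr hab
      · by_cases hbu : b = u
        · exact .inl hbu
        · exact .inr (h u b a hua hab (Ne.symm hbu))
  exact (hclosed v ((reachable_iff_reflTransGen u v).1 (hG u v))).resolve_left (Ne.symm huv)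

variable {V : Type*} [Fintype V] [DecidableEq V] {G : SimpleGraph V} [DecidableRel G.Adj]

theorem lapMatrix_apply_of_ne {R : Type*} [AddGroupWithOne R] {u v : V} (h : u ≠ v) :
    G.lapMatrix R u v = if G.Adj u v then -1 else 0 := by
  by_cases huv : G.Adj u v <;> simp [lapMatrix, degMatrix, h, huv]

theorem trace_lapMatrix {R : Type*} [Ring R] :
    (G.lapMatrix R).trace = 2 * #G.edgeFinset := by
  rw [lapMatrix, Matrix.trace_sub, trace_adjMatrix, sub_zero, degMatrix, Matrix.trace_diagonal,
    ← Nat.cast_sum, sum_degrees_eq_twice_card_edges]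
  push_cast
  rfl

theorem Connected.eq_top_of_lapMatrix_mul_self_eq_smul (hG : G.Connected) {c : ℝ}
    (h : G.lapMatrix ℝ * G.lapMatrix ℝ = c • G.lapMatrix ℝ) : G = ⊤ := by
  refine hG.eq_top_of_adj_of_adj fun u v w huw hwv huv => ?_
  by_contra hnadj
  have hLuv : G.lapMatrix ℝ u v = 0 := by simp [lapMatrix_apply_of_ne huv, hnadj]
  have hterm : ∀ k, 0 ≤ G.lapMatrix ℝ u k * G.lapMatrix ℝ k v := by
    intro k
    by_cases hku : k = u
    · simp [hku, hLuv]
    by_cases hkv : k = v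
    · simp [hkv, hLuv]
    rw [lapMatrix_apply_of_ne (Ne.symm hku), lapMatrix_apply_of_ne hkv]
    split_ifs <;> norm_num
  have hw : G.lapMatrix ℝ u w * G.lapMatrix ℝ w v = 1 := by
    simp [lapMatrix_apply_of_ne huw.ne, lapMatrix_apply_of_ne hwv.ne, huw, hwv]
  have hpos : 0 < (G.lapMatrix ℝ * G.lapMatrix ℝ) u v :=
    sum_pos' (fun k _ => hterm k) ⟨w, mem_univ w, hw.symm ▸ one_pos⟩
  simp [h, hLuv] at hpos

theorem lapMatrix_top_eq {R : Type*} [Ring R] [DecidableRel (⊤ : SimpleGraph V).Adj] :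
    (⊤ : SimpleGraph V).lapMatrix R = (Fintype.card V : R) • 1 - .of fun _ _ => 1 := by
  ext u v
  by_cases huv : u = v
  · subst huv
    have hdeg : (⊤ : SimpleGraph V).degree u = Fintype.card V - 1 := by
      convert complete_graph_degree u
    simp [lapMatrix, degMatrix, hdeg, Nat.cast_sub (Fintype.card_pos_iff.2 ⟨u⟩)]
  · simp [lapMatrix_apply_of_ne huv, huv]

theorem lapMatrix_top_mul_self {R : Type*} [CommRing R] [DecidableRel (⊤ : SimpleGraph V).Adj] :
    (⊤ : SimpleGraph V).lapMatrix R * (⊤ : SimpleGraph V).lapMatrix R =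
      (Fintype.card V : R) • (⊤ : SimpleGraph V).lapMatrix R := by
  have hJ : (.of fun _ _ => 1 : Matrix V V R) * .of (fun _ _ => 1) =
      (Fintype.card V : R) • .of fun _ _ => 1 := by
    ext; simp [Matrix.mul_apply]
  rw [lapMatrix_top_eq, sub_mul, mul_sub, mul_sub, hJ]
  simp only [Matrix.smul_mul, Matrix.mul_smul, Matrix.one_mul, Matrix.mul_one, smul_sub]
  module

theorem Connected.eq_top_iff_exists_lapMatrix_mul_self_eq_smul (hG : G.Connected) :
    G = ⊤ ↔ ∃ c : ℝ, G.lapMatrix ℝ * G.lapMatrix ℝ = c • G.lapMatrix ℝ := by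
  refine ⟨?_, fun ⟨c, hc⟩ => hG.eq_top_of_lapMatrix_mul_self_eq_smul hc⟩
  rintro rfl
  exact ⟨_, lapMatrix_top_mul_self⟩

end SimpleGraph

namespace IsLapEigSeq
variable {V : Type*} [Fintype V] [DecidableEq V] {G : SimpleGraph V} [DecidableRel G.Adj]
  {n : ℕ} {μ : Fin n → ℝ}

theorem sum_eq (hμ : IsLapEigSeq G μ) : ∑ i, μ i = 2 * #G.edgeFinset := by
  obtain ⟨-, e, he⟩ := hμ
  rw [← Fintype.sum_equiv e _ _ he, ← G.trace_lapMatrix,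
    (G.posSemidef_lapMatrix (R := ℝ)).1.trace_eq_sum_eigenvalues]
  rfl

theorem lapMatrix_mul_self_eq_smul_iff (hμ : IsLapEigSeq G μ) (c : ℝ) :
    G.lapMatrix ℝ * G.lapMatrix ℝ = c • G.lapMatrix ℝ ↔ ∀ i, μ i * μ i = c * μ i := by
  obtain ⟨-, e, he⟩ := hμ
  rw [(G.posSemidef_lapMatrix (R := ℝ)).1.mul_self_eq_smul_iff c, ← e.forall_congr_right]
  simp only [← he]
  rfl

end IsLapEigSeq

theorem statement_2 {n : ℕ} (hn : 2 ≤ n) (G : SimpleGraph (Fin n)) [DecidableRel G.Adj]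
    (hG : G.Connected) (μ : Fin n → ℝ) (hμ : IsLapEigSeq G μ)
    (hμ1 : μ ⟨0, by omega⟩ = 0) (hμ2 : 0 < μ ⟨1, by omega⟩)
    (p : ℝ) (hp : 0 < p) :
    (n : ℝ) * ∑ i ∈ univ.filter (fun i : Fin n => 0 < i.val), 1 / μ i ^ 2 ≥
      (n : ℝ) * ((2 * (G.edgeFinset.card : ℝ)) ^ (p + 1) /
          ∑ i ∈ univ.filter (fun i : Fin n => 0 < i.val), μ i ^ (3 * p + 1)) ^ (1 / p) ∧
    ((n : ℝ) * ∑ i ∈ univ.filter (fun i : Fin n => 0 < i.val), 1 / μ i ^ 2 =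
      (n : ℝ) * ((2 * (G.edgeFinset.card : ℝ)) ^ (p + 1) /
          ∑ i ∈ univ.filter (fun i : Fin n => 0 < i.val), μ i ^ (3 * p + 1)) ^ (1 / p) ↔
      G = ⊤) := by
  set s := univ.filter fun i : Fin n => 0 < i.val
  have hs : s.Nonempty := ⟨⟨1, by omega⟩, by simp [s]⟩
  have hpos : ∀ i ∈ s, 0 < μ i := fun i hi =>
    hμ2.trans_le (hμ.1 (Fin.le_def.2 (Nat.succ_le_of_lt (by simpa [s] using hi))))
  have hzero : ∀ i ∉ s, μ i = 0 := fun i hi => by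
    rw [← hμ1]; congr; ext; simpa [s] using hi
  have htrace : ∑ i ∈ s, μ i = 2 * #G.edgeFinset := by
    rw [← hμ.sum_eq, sum_subset (subset_univ s) fun i _ hi => hzero i hi]
  rw [← htrace]
  have hT : 0 ≤ (∑ i ∈ s, μ i) ^ (p + 1) :=
    Real.rpow_nonneg (sum_nonneg fun i hi => (hpos i hi).le) _
  have hA : 0 ≤ ∑ i ∈ s, 1 / μ i ^ 2 := sum_nonneg fun i _ => by positivity
  have hB : 0 < ∑ i ∈ s, μ i ^ (3 * p + 1) :=
    sum_pos (fun i hi => Real.rpow_pos_of_pos (hpos i hi) _) hs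
  refine ⟨mul_le_mul_of_nonneg_left ((div_rpow_one_div_le_iff hT hA hB hp).2
    (rpow_sum_le_sum_one_div_sq_rpow_mul hs hpos hp.le)) n.cast_nonneg, ?_⟩
  rw [mul_right_inj' (Nat.cast_pos.2 (by omega)).ne', eq_comm, div_rpow_one_div_eq_iff hT hA hB hp,
    rpow_sum_eq_sum_one_div_sq_rpow_mul_iff hs hpos hp,
    forall_mem_eq_iff_exists_mul_self_eq hs (fun i hi => (hpos i hi).ne') hzero,
    hG.eq_top_iff_exists_lapMatrix_mul_self_eq_smul]
  simp only [hμ.lapMatrix_mul_self_eq_smul_iff]
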